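/- Let B be a set, a ∉ B, and let ρ : B → Perm(ℕ) be such that the image of the induced homomorphism ρ̂ : FreeGroup(B) → Perm(ℕ) is a cofinitary group. Let G be a filter on Q_{{a},ρ} such that: for every n ∈ ℕ, G contains a condition (s,F) with n ∈ dom(s) and a condition with n ∈ ran(s); and for every good word w on {a} ∪ B, G contains a condition (s,F) with w ∈ F. Let g := ⋃{s : ∃F, (s,F) ∈ G}. Then g is a permutation of ℕ and the subgroup of Perm(ℕ) generated by {g} ∪ ρ(B) is a cofinitary group. -/

import Mathlib

/-- A permutation of `ℕ` is *cofinitary* if it has only finitely many fixed points. -/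
def IsCofinitary (g : Equiv.Perm ℕ) : Prop := {n : ℕ | g n = n}.Finite

/-- A subgroup of `Perm ℕ` is a *cofinitary group* if every non-identity element is cofinitary. -/
def IsCofinitaryGroup (G : Subgroup (Equiv.Perm ℕ)) : Prop :=
  ∀ g ∈ G, g ≠ 1 → IsCofinitary g

/-- The reduced word of an element of a free group. -/
noncomputable def reducedWord {A : Type*} (w : FreeGroup A) : List (A × Bool) :=
  letI := Classical.decEq A
  w.toWord

/-- A *good word*: a non-identity element of the free group whose reduced word is either a
(nonzero, possibly negative) power of a single generator, or whose first and last letters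
involve two distinct generators. -/
def IsGoodWord {A : Type*} (w : FreeGroup A) : Prop :=
  w ≠ 1 ∧
    ((∃ b : A, ∀ x ∈ reducedWord w, x.1 = b) ∨
      (∀ x y : A × Bool, (reducedWord w).head? = some x →
        (reducedWord w).getLast? = some y → x.1 ≠ y.1))

/-- `s : ℕ →. ℕ` is a finite partial injection. -/
def FinPartInj (s : ℕ →. ℕ) : Prop :=
  s.Dom.Finite ∧ ∀ ⦃n₁ n₂ m : ℕ⦄, m ∈ s n₁ → m ∈ s n₂ → n₁ = n₂

/-- The inverse of a partial function: defined at `m` iff there is a unique `n` mapped to `m`. -/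
noncomputable def pfunInv (s : ℕ →. ℕ) : ℕ →. ℕ :=
  fun m => ⟨∃! n, m ∈ s n, fun h => h.choose⟩

/-- The partial function substituted for a single letter of the alphabet `{a} ∪ B`
(`none` plays the role of the extra symbol `a`): `ρ b` for `b`, `(ρ b)⁻¹` for `b⁻¹`,
`s` for `a` and `s⁻¹` for `a⁻¹`. -/
noncomputable def letterEval {B : Type*} (ρ : B → Equiv.Perm ℕ) (s : ℕ →. ℕ) :
    Option B × Bool → (ℕ →. ℕ)
  | (some b, true) => PFun.lift ⇑(ρ b)
  | (some b, false) => PFun.lift ⇑((ρ b).symm)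
  | (none, true) => s
  | (none, false) => pfunInv s

/-- Letter-by-letter partial composition along a word (read right to left). -/
noncomputable def listEval {B : Type*} (ρ : B → Equiv.Perm ℕ) (s : ℕ →. ℕ) :
    List (Option B × Bool) → (ℕ →. ℕ)
  | [] => PFun.id ℕ
  | x :: u => (letterEval ρ s x).comp (listEval ρ s u)

/-- `e_w[s,ρ]`: the partial function obtained from the reduced word of `w` by substituting
`ρ b` for each `b ∈ B`, and the finite partial injection `s` for the letter `a = none`. -/
noncomputable def wordEval {B : Type*} (ρ : B → Equiv.Perm ℕ) (s : ℕ →. ℕ)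
    (w : FreeGroup (Option B)) : ℕ →. ℕ :=
  listEval ρ s (reducedWord w)

/-- A condition of the poset `Q_{{a},ρ}`: a pair `(s, F)` where `s` is a finite partial
injection on `ℕ` and `F` is a finite set of good words on the alphabet `{a} ∪ B`. -/
def IsCondition {B : Type*} (p : (ℕ →. ℕ) × Set (FreeGroup (Option B))) : Prop :=
  FinPartInj p.1 ∧ p.2.Finite ∧ ∀ w ∈ p.2, IsGoodWord w

/-- The extension relation of `Q_{{a},ρ}`: `q = (t,H)` extends `p = (s,F)` iff `s ⊆ t`,
`F ⊆ H`, and for every `w ∈ F` and `n`, if `e_w[t,ρ](n) = n` then `e_w[s,ρ](n)` is defined. -/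
def Extends {B : Type*} (ρ : B → Equiv.Perm ℕ)
    (q p : (ℕ →. ℕ) × Set (FreeGroup (Option B))) : Prop :=
  (∀ ⦃n m : ℕ⦄, m ∈ p.1 n → m ∈ q.1 n) ∧ p.2 ⊆ q.2 ∧
    ∀ w ∈ p.2, ∀ n : ℕ, n ∈ wordEval ρ q.1 w n → (wordEval ρ p.1 w n).Dom

/-- `s ∪ {(n,m)}`: extend the partial function `s` by the pair `(n,m)`. -/
def pfunExtend (s : ℕ →. ℕ) (n m : ℕ) : ℕ →. ℕ :=
  fun k => if k = n then Part.some m else s k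


section Aux

open List FreeGroup

/-! ### PFun lemmas -/

lemma mem_pfunLift {f : ℕ → ℕ} {n m : ℕ} : m ∈ PFun.lift f n ↔ f n = m := by
  rw [show PFun.lift f n = Part.some (f n) from rfl, Part.mem_some_iff, eq_comm]

lemma mem_pfunId {n m : ℕ} : m ∈ PFun.id ℕ n ↔ n = m := by
  rw [PFun.id_apply, Part.mem_some_iff, eq_comm]

lemma pfunInv_mem {s : ℕ →. ℕ} {n m : ℕ} (h : n ∈ pfunInv s m) : m ∈ s n := by
  obtain ⟨hd, hget⟩ := h
  have := hd.choose_spec.1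
  rwa [show hd.choose = n from hget] at this

lemma mem_pfunInv {s : ℕ →. ℕ}
    (hs : ∀ ⦃n₁ n₂ m : ℕ⦄, m ∈ s n₁ → m ∈ s n₂ → n₁ = n₂) {n m : ℕ}
    (h : m ∈ s n) : n ∈ pfunInv s m := by
  have hd : ∃! k, m ∈ s k := ⟨n, h, fun y hy => hs hy h⟩
  exact ⟨hd, (hd.choose_spec.2 n h).symm⟩

lemma ran_finite_of_dom_finite {s : ℕ →. ℕ} (hdom : s.Dom.Finite) : s.ran.Finite := by
  classical
  have hsub : s.ran ⊆ (fun n => if h : (s n).Dom then (s n).get h else 0) '' s.Dom := by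
    rintro m ⟨n, hn⟩
    exact ⟨n, ⟨hn.fst, by simp [hn.fst, Part.get_eq_of_mem hn]⟩⟩
  exact (hdom.image _).subset hsub

variable {B : Type*} (ρ : B → Equiv.Perm ℕ)

/-! ### listEval lemmas -/

lemma mem_listEval_cons {s : ℕ →. ℕ} {x : Option B × Bool} {u : List (Option B × Bool)}
    {n m : ℕ} : m ∈ listEval ρ s (x :: u) n ↔ ∃ k ∈ listEval ρ s u n, m ∈ letterEval ρ s x k := by
  show m ∈ ((letterEval ρ s x).comp (listEval ρ s u)) n ↔ _
  rw [PFun.comp_apply]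
  exact Part.mem_bind_iff

lemma letterEval_inj {s : ℕ →. ℕ}
    (hs : ∀ ⦃n₁ n₂ m : ℕ⦄, m ∈ s n₁ → m ∈ s n₂ → n₁ = n₂) (x : Option B × Bool) :
    ∀ ⦃n₁ n₂ m : ℕ⦄, m ∈ letterEval ρ s x n₁ → m ∈ letterEval ρ s x n₂ → n₁ = n₂ := by
  rcases x with ⟨_ | b, _ | _⟩
  · exact fun n₁ n₂ m h₁ h₂ =>
      Part.mem_unique (pfunInv_mem h₁) (pfunInv_mem h₂)
  · exact hs
  · intro n₁ n₂ m h₁ h₂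
    rw [show letterEval ρ s (some b, false) = PFun.lift ⇑((ρ b).symm) from rfl,
      mem_pfunLift] at h₁ h₂
    exact (ρ b).symm.injective (h₁.trans h₂.symm)
  · intro n₁ n₂ m h₁ h₂
    rw [show letterEval ρ s (some b, true) = PFun.lift ⇑(ρ b) from rfl,
      mem_pfunLift] at h₁ h₂
    exact (ρ b).injective (h₁.trans h₂.symm)

lemma listEval_inj {s : ℕ →. ℕ}
    (hs : ∀ ⦃n₁ n₂ m : ℕ⦄, m ∈ s n₁ → m ∈ s n₂ → n₁ = n₂) :
    ∀ (l : List (Option B × Bool)) ⦃n₁ n₂ m : ℕ⦄,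
      m ∈ listEval ρ s l n₁ → m ∈ listEval ρ s l n₂ → n₁ = n₂ := by
  intro l
  induction l with
  | nil =>
    intro n₁ n₂ m h₁ h₂
    rw [show listEval ρ s [] = PFun.id ℕ from rfl, mem_pfunId] at h₁ h₂
    omega
  | cons x u ih =>
    intro n₁ n₂ m h₁ h₂
    rw [mem_listEval_cons] at h₁ h₂
    obtain ⟨k₁, hk₁, hm₁⟩ := h₁
    obtain ⟨k₂, hk₂, hm₂⟩ := h₂
    have : k₁ = k₂ := letterEval_inj ρ hs x hm₁ hm₂
    subst this
    exact ih hk₁ hk₂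

lemma listEval_mono {s t : ℕ →. ℕ}
    (ht : ∀ ⦃n₁ n₂ m : ℕ⦄, m ∈ t n₁ → m ∈ t n₂ → n₁ = n₂)
    (hst : ∀ ⦃n m : ℕ⦄, m ∈ s n → m ∈ t n) :
    ∀ (l : List (Option B × Bool)) ⦃n m : ℕ⦄,
      m ∈ listEval ρ s l n → m ∈ listEval ρ t l n := by
  intro l
  induction l with
  | nil => intro n m h; exact h
  | cons x u ih =>
    intro n m h
    rw [mem_listEval_cons] at h ⊢
    obtain ⟨k, hk, hm⟩ := h
    refine ⟨k, ih hk, ?_⟩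
    rcases x with ⟨_ | b, _ | _⟩
    · exact mem_pfunInv ht (hst (pfunInv_mem hm))
    · exact hst hm
    · exact hm
    · exact hm

lemma wordEval_mono {s t : ℕ →. ℕ}
    (ht : ∀ ⦃n₁ n₂ m : ℕ⦄, m ∈ t n₁ → m ∈ t n₂ → n₁ = n₂)
    (hst : ∀ ⦃n m : ℕ⦄, m ∈ s n → m ∈ t n) (w : FreeGroup (Option B)) ⦃n m : ℕ⦄
    (h : m ∈ wordEval ρ s w n) : m ∈ wordEval ρ t w n :=
  listEval_mono ρ ht hst _ h

/-! ### Finiteness of the domain of a word evaluation -/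

lemma finite_dom_listEval {s : ℕ →. ℕ} (hs : FinPartInj s) :
    ∀ (l : List (Option B × Bool)), (∃ e, ((none : Option B), e) ∈ l) →
      {n : ℕ | (listEval ρ s l n).Dom}.Finite := by
  intro l
  induction l with
  | nil => rintro ⟨e, he⟩; simp at he
  | cons x u ih =>
    rintro ⟨e, he⟩
    classical
    by_cases hu : ∃ e, ((none : Option B), e) ∈ u
    · refine ((ih hu).subset ?_)
      intro n hn
      rw [Set.mem_setOf_eq, Part.dom_iff_mem] at hn ⊢
      obtain ⟨m, hm⟩ := hn
      rw [mem_listEval_cons] at hm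
      obtain ⟨k, hk, -⟩ := hm
      exact ⟨k, hk⟩
    · have hx : x = ((none : Option B), e) := by
        rcases List.mem_cons.mp he with h | h
        · exact h.symm
        · exact absurd ⟨e, h⟩ hu
      subst hx
      -- the set of allowed intermediate values is finite
      have hK : {k : ℕ | (letterEval ρ s ((none : Option B), e) k).Dom}.Finite := by
        cases e
        · exact (ran_finite_of_dom_finite hs.1).subset
            (fun k hk => ⟨hk.choose, hk.choose_spec.1⟩)
        · exact hs.1
      set F : ℕ → ℕ := fun n => if h : (listEval ρ s u n).Dom then (listEval ρ s u n).get h else 0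
        with hF
      refine Set.Finite.of_finite_image (f := F) (hK.subset ?_) ?_
      · rintro k ⟨n, hn, rfl⟩
        rw [Set.mem_setOf_eq, Part.dom_iff_mem] at hn
        obtain ⟨m, hm⟩ := hn
        rw [mem_listEval_cons] at hm
        obtain ⟨k', hk', hm'⟩ := hm
        have hdom' : (listEval ρ s u n).Dom := hk'.fst
        have : F n = k' := by simp [hF, hdom', Part.get_eq_of_mem hk']
        rw [this]
        exact hm'.fst
      · intro n₁ h₁ n₂ h₂ hFe
        rw [Set.mem_setOf_eq, Part.dom_iff_mem] at h₁ h₂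
        obtain ⟨m₁, hm₁⟩ := h₁
        obtain ⟨m₂, hm₂⟩ := h₂
        rw [mem_listEval_cons] at hm₁ hm₂
        obtain ⟨k₁, hk₁, -⟩ := hm₁
        obtain ⟨k₂, hk₂, -⟩ := hm₂
        have e₁ : F n₁ = k₁ := by simp [hF, hk₁.fst, Part.get_eq_of_mem hk₁]
        have e₂ : F n₂ = k₂ := by simp [hF, hk₂.fst, Part.get_eq_of_mem hk₂]
        have hk12 : k₁ = k₂ := by rw [← e₁, hFe, e₂]
        exact listEval_inj ρ hs.2 u hk₁ (hk12 ▸ hk₂)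

/-! ### Total evaluation -/

noncomputable def permLetter {B : Type*} (ν : Option B → Equiv.Perm ℕ) (x : Option B × Bool) :
    Equiv.Perm ℕ :=
  bif x.2 then ν x.1 else (ν x.1)⁻¹

lemma mem_listEval_lift (ν : Option B → Equiv.Perm ℕ) (hν : ∀ b, ν (some b) = ρ b) :
    ∀ (l : List (Option B × Bool)) {n m : ℕ},
      m ∈ listEval ρ (PFun.lift ⇑(ν none)) l n ↔ (l.map (permLetter ν)).prod n = m := by
  intro l
  induction l with
  | nil =>
    intro n m
    rw [show listEval ρ _ [] = PFun.id ℕ from rfl, mem_pfunId]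
    simp
  | cons x u ih =>
    intro n m
    rw [mem_listEval_cons, List.map_cons, List.prod_cons, Equiv.Perm.mul_apply]
    constructor
    · rintro ⟨k, hk, hm⟩
      rw [ih] at hk
      rw [hk]
      rcases x with ⟨_ | b, _ | _⟩
      · -- (none, false)
        have := pfunInv_mem hm
        rw [mem_pfunLift] at this
        simp only [permLetter, cond_false]
        rw [Equiv.Perm.inv_def, Equiv.symm_apply_eq]
        exact this.symm
      · -- (none, true)
        rw [show letterEval ρ (PFun.lift ⇑(ν none)) (none, true) = PFun.lift ⇑(ν none) from rfl,
          mem_pfunLift] at hm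
        simpa [permLetter] using hm
      · rw [show letterEval ρ (PFun.lift ⇑(ν none)) (some b, false) = PFun.lift ⇑((ρ b).symm)
          from rfl, mem_pfunLift] at hm
        simp only [permLetter, cond_false, hν b]
        exact hm
      · rw [show letterEval ρ (PFun.lift ⇑(ν none)) (some b, true) = PFun.lift ⇑(ρ b)
          from rfl, mem_pfunLift] at hm
        simp only [permLetter, cond_true, hν b]
        exact hm
    · intro hm
      refine ⟨(u.map (permLetter ν)).prod n, (ih).mpr rfl, ?_⟩
      set k := (u.map (permLetter ν)).prod n
      rcases x with ⟨_ | b, _ | _⟩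
      · -- (none, false) : m ∈ pfunInv (lift (ν none)) k
        have hg : (ν none) m = k := by
          simp only [permLetter, cond_false] at hm
          rw [← hm]; simp
        refine mem_pfunInv ?_ (mem_pfunLift.mpr hg)
        intro n₁ n₂ m' h₁ h₂
        rw [mem_pfunLift] at h₁ h₂
        exact (ν none).injective (h₁.trans h₂.symm)
      · exact mem_pfunLift.mpr (by simpa [permLetter] using hm)
      · refine mem_pfunLift.mpr ?_
        simp only [permLetter, cond_false, hν b] at hm
        simpa using hm
      · refine mem_pfunLift.mpr ?_
        simpa [permLetter, hν b] using hm

lemma mem_wordEval_lift (ν : Option B → Equiv.Perm ℕ) (hν : ∀ b, ν (some b) = ρ b)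
    (w : FreeGroup (Option B)) {n m : ℕ} :
    m ∈ wordEval ρ (PFun.lift ⇑(ν none)) w n ↔ (FreeGroup.lift ν) w n = m := by
  letI := Classical.decEq (Option B)
  rw [show wordEval ρ (PFun.lift ⇑(ν none)) w = listEval ρ (PFun.lift ⇑(ν none)) w.toWord
    from rfl, mem_listEval_lift ρ ν hν]
  have : FreeGroup.lift ν w = (w.toWord.map (permLetter ν)).prod := by
    conv_lhs => rw [← FreeGroup.mk_toWord (x := w)]
    rw [FreeGroup.lift_mk]
    rfl
  rw [this]

/-! ### Pure words -/

lemma lift_mem_range_of_pure (ν : Option B → Equiv.Perm ℕ) (hν : ∀ b, ν (some b) = ρ b)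
    (w : FreeGroup (Option B)) (hw : ∀ y ∈ reducedWord w, y.1 ≠ (none : Option B)) :
    FreeGroup.lift ν w ∈ (FreeGroup.lift ρ).range := by
  letI := Classical.decEq (Option B)
  rw [← FreeGroup.mk_toWord (x := w), FreeGroup.lift_mk]
  apply Subgroup.list_prod_mem
  intro q hq
  simp only [List.mem_map] at hq
  obtain ⟨y, hy, rfl⟩ := hq
  obtain ⟨b, hb⟩ : ∃ b, y.1 = some b := Option.ne_none_iff_exists'.mp (hw y hy)
  rw [hb]
  cases y.2
  · simp only [cond_false]
    exact inv_mem ⟨FreeGroup.of b, by rw [FreeGroup.lift_apply_of, hν b]⟩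
  · simp only [cond_true]
    exact ⟨FreeGroup.of b, by rw [FreeGroup.lift_apply_of, hν b]⟩

/-! ### Conjugation and cofinitariness -/

lemma isCofinitary_of_conj {h k : Equiv.Perm ℕ} (hc : IsCofinitary (k * h * k⁻¹)) :
    IsCofinitary h := by
  have hsub : {n : ℕ | h n = n} ⊆ ⇑k ⁻¹' {n : ℕ | (k * h * k⁻¹) n = n} := by
    intro n hn
    simp only [Set.mem_preimage, Set.mem_setOf_eq, Equiv.Perm.mul_apply,
      Equiv.Perm.inv_def, Equiv.symm_apply_apply]
    rw [Set.mem_setOf_eq] at hn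
    rw [hn]
  exact (hc.preimage (k.injective.injOn)).subset hsub

/-! ### Reduced words and the `Chain'` characterisation -/

section Reduced

variable {A : Type*}

/-- The no-cancellation relation on letters. -/
def NoCancel (x y : A × Bool) : Prop := ¬(x.1 = y.1 ∧ x.2 = !y.2)

lemma chain'_reduce [DecidableEq A] (L : List (A × Bool)) :
    List.Chain' NoCancel (FreeGroup.reduce L) := by
  induction L with
  | nil => exact List.isChain_nil
  | cons x L ih =>
    rw [FreeGroup.reduce.cons]
    cases h : FreeGroup.reduce L with
    | nil => exact List.isChain_singleton x
    | cons hd tl =>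
      rw [h] at ih
      show List.Chain' NoCancel (if x.1 = hd.1 ∧ x.2 = !hd.2 then tl else x :: hd :: tl)
      by_cases hc : x.1 = hd.1 ∧ x.2 = !hd.2
      · rw [if_pos hc]
        exact ih.tail
      · rw [if_neg hc]
        exact List.isChain_cons_cons.mpr ⟨hc, ih⟩

lemma reduce_eq_self_of_chain' [DecidableEq A] {L : List (A × Bool)}
    (h : List.Chain' NoCancel L) : FreeGroup.reduce L = L := by
  induction L with
  | nil => rfl
  | cons x L ih =>
    rw [FreeGroup.reduce.cons, ih h.tail]
    cases L with
    | nil => rfl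
    | cons hd tl =>
      show (if x.1 = hd.1 ∧ x.2 = !hd.2 then tl else x :: hd :: tl) = x :: hd :: tl
      rw [if_neg (List.isChain_cons_cons.mp h).1]

lemma chain'_toWord [DecidableEq A] (w : FreeGroup A) :
    List.Chain' NoCancel w.toWord := by
  rw [← FreeGroup.reduce_toWord]
  exact chain'_reduce _

/-! ### Every nontrivial element is conjugate to a good word -/

private lemma good_aux :
    ∀ (N : ℕ) (w : FreeGroup A), (reducedWord w).length ≤ N → w ≠ 1 →
      ∃ u : FreeGroup A, IsGoodWord (u * w * u⁻¹) := by
  intro N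
  induction N with
  | zero =>
    intro w hlen hw
    letI := Classical.decEq A
    exact absurd (FreeGroup.toWord_eq_nil_iff.mp (List.eq_nil_of_length_eq_zero
      (Nat.le_zero.mp hlen))) hw
  | succ N ih =>
    intro w hlen hw
    letI := Classical.decEq A
    have hlw : reducedWord w = w.toWord := rfl
    have hlne : reducedWord w ≠ [] := fun h => hw (FreeGroup.toWord_eq_nil_iff.mp (hlw ▸ h))
    have hchain : List.Chain' NoCancel (reducedWord w) := hlw ▸ chain'_toWord w
    have hwl : FreeGroup.mk (reducedWord w) = w := hlw ▸ FreeGroup.mk_toWord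
    obtain ⟨x, t0, hlx⟩ : ∃ x t0, reducedWord w = x :: t0 := by
      cases h : reducedWord w with
      | nil => exact absurd h hlne
      | cons a b => exact ⟨a, b, rfl⟩
    obtain ⟨z, hz⟩ : ∃ z, (reducedWord w).getLast? = some z :=
      ⟨(reducedWord w).getLast hlne, List.getLast?_eq_getLast hlne⟩
    by_cases hcase : z = (x.1, !x.2)
    · -- cyclic cancellation at the junction
      have ht0ne : t0 ≠ [] := by
        rintro rfl
        rw [hlx] at hz
        have hzx : x = z := by simpa using hz
        have : x.2 = !x.2 := congrArg Prod.snd (hzx.trans hcase)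
        simp at this
      have hzt : t0.getLast? = some z := by
        obtain ⟨y, t0', rfl⟩ : ∃ y t0', t0 = y :: t0' := by
          cases t0 with
          | nil => exact absurd rfl ht0ne
          | cons a b => exact ⟨a, b, rfl⟩
        rw [hlx, List.getLast?_cons_cons] at hz
        exact hz
      obtain ⟨mid, hmid⟩ : ∃ mid, t0 = mid ++ [z] := List.getLast?_eq_some_iff.mp hzt
      have hdecomp : reducedWord w = x :: (mid ++ [z]) := by rw [hlx, hmid]
      have hvz : FreeGroup.mk [z] = (FreeGroup.mk [x])⁻¹ := by
        have hir : FreeGroup.invRev [x] = [(x.1, !x.2)] := by simp [FreeGroup.invRev]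
        rw [hcase, FreeGroup.inv_mk, hir]
      have hwdec : w = FreeGroup.mk [x] * FreeGroup.mk mid * (FreeGroup.mk [x])⁻¹ := by
        rw [← hwl, hdecomp, show x :: (mid ++ [z]) = [x] ++ mid ++ [z] by simp,
          ← FreeGroup.mul_mk, ← FreeGroup.mul_mk, hvz]
      have hw₀ne : FreeGroup.mk mid ≠ 1 := by
        rintro h1
        apply hw
        rw [hwdec, h1, mul_one, mul_inv_cancel]
      have hmidchain : List.Chain' NoCancel mid := by
        have h1 := hchain
        rw [hdecomp] at h1
        exact (List.isChain_append.mp h1.tail).1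
      have hmidred : reducedWord (FreeGroup.mk mid) = mid := by
        show (FreeGroup.mk mid).toWord = mid
        rw [FreeGroup.toWord_mk]
        exact reduce_eq_self_of_chain' hmidchain
      have hmidlen : (reducedWord (FreeGroup.mk mid)).length ≤ N := by
        rw [hmidred]
        have h3 : (reducedWord w).length = mid.length + 2 := by rw [hdecomp]; simp
        omega
      obtain ⟨u₀, hu₀⟩ := ih (FreeGroup.mk mid) hmidlen hw₀ne
      refine ⟨u₀ * (FreeGroup.mk [x])⁻¹, ?_⟩
      have heq : u₀ * (FreeGroup.mk [x])⁻¹ * w * (u₀ * (FreeGroup.mk [x])⁻¹)⁻¹ =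
          u₀ * FreeGroup.mk mid * u₀⁻¹ := by
        rw [hwdec]
        group
      rw [heq]
      exact hu₀
    · by_cases hall : ∀ y ∈ reducedWord w, y.1 = x.1
      · refine ⟨1, ?_⟩
        rw [show (1 : FreeGroup A) * w * 1⁻¹ = w by group]
        exact ⟨hw, Or.inl ⟨x.1, hall⟩⟩
      · push_neg at hall
        by_cases hzx : z.1 = x.1
        · -- rotate the word
          set p : A × Bool → Bool := fun y => decide (y.1 = x.1) with hp
          have htd : (reducedWord w).takeWhile p ++ (reducedWord w).dropWhile p = reducedWord w :=
            List.takeWhile_append_dropWhile (p := p) (l := reducedWord w)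
          set t := (reducedWord w).takeWhile p with htk
          set d := (reducedWord w).dropWhile p with hdr
          have hdne : d ≠ [] := by
            rintro h
            obtain ⟨y, hy, hy2⟩ := hall
            rw [h, List.append_nil] at htd
            exact hy2 (by simpa [hp] using List.mem_takeWhile_imp (htd ▸ hy : y ∈ t))
          have htne : t ≠ [] := by
            rw [htk, hlx, List.takeWhile_cons_of_pos (by simp [hp])]
            simp
          have hthead : t.head? = some x := by
            rw [htk, hlx, List.takeWhile_cons_of_pos (by simp [hp])]
            rfl
          have hdgen : ∀ y ∈ d.head?, y.1 ≠ x.1 := by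
            intro y hy
            have h5 := List.head_dropWhile_not p hdne
            rw [List.head?_eq_head hdne] at hy
            have hyd : y = d.head hdne := by simpa using hy.symm
            rw [hyd]
            simpa [hp] using h5
          have htgen : ∀ y ∈ t, y.1 = x.1 := fun y hy => by
            simpa [hp] using List.mem_takeWhile_imp hy
          have hdlast : d.getLast? = some z := by
            rw [← htd, List.getLast?_append_of_ne_nil t hdne] at hz
            exact hz
          have hchain_t : List.Chain' NoCancel t := hchain.prefix (htk ▸ List.takeWhile_prefix p)
          have hchain_d : List.Chain' NoCancel d := hchain.suffix (hdr ▸ List.dropWhile_suffix p)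
          have hjunc : NoCancel z x := by
            rintro ⟨h1, h2⟩
            exact hcase (Prod.ext hzx h2)
          have hchain_dt : List.Chain' NoCancel (d ++ t) := by
            refine List.isChain_append.mpr ?_
            refine ⟨hchain_d, hchain_t, ?_⟩
            intro zz hzz xx hxx
            have hzz' : zz = z := by
              rw [hdlast] at hzz
              symm; simpa using hzz
            have hxx' : xx = x := by
              rw [hthead] at hxx
              symm; simpa using hxx
            rw [hzz', hxx']
            exact hjunc
          refine ⟨(FreeGroup.mk t)⁻¹, ?_⟩
          have hconj : (FreeGroup.mk t)⁻¹ * w * ((FreeGroup.mk t)⁻¹)⁻¹ =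
              FreeGroup.mk (d ++ t) := by
            rw [← hwl, ← htd, ← FreeGroup.mul_mk, ← FreeGroup.mul_mk]
            group
          have hred : reducedWord ((FreeGroup.mk t)⁻¹ * w * ((FreeGroup.mk t)⁻¹)⁻¹) = d ++ t := by
            rw [hconj]
            show (FreeGroup.mk (d ++ t)).toWord = d ++ t
            rw [FreeGroup.toWord_mk]
            exact reduce_eq_self_of_chain' hchain_dt
          refine ⟨?_, Or.inr ?_⟩
          · intro h1
            have h2 : reducedWord ((FreeGroup.mk t)⁻¹ * w * ((FreeGroup.mk t)⁻¹)⁻¹) = [] := by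
              rw [h1]
              exact FreeGroup.toWord_one
            rw [hred] at h2
            exact hdne (List.append_eq_nil_iff.mp h2).1
          · intro xx yy hh hlast
            rw [hred] at hh hlast
            rw [List.head?_append_of_ne_nil d hdne] at hh
            have hxx1 : xx.1 ≠ x.1 := hdgen xx (hh ▸ rfl)
            rw [List.getLast?_append_of_ne_nil d htne,
              List.getLast?_eq_getLast htne] at hlast
            have hyy : yy ∈ t := by
              rw [Option.some_inj.mp hlast.symm]
              exact List.getLast_mem htne
            rw [htgen yy hyy]
            exact hxx1
        · -- first and last generators already distinct
          refine ⟨1, ?_⟩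
          rw [show (1 : FreeGroup A) * w * 1⁻¹ = w by group]
          refine ⟨hw, Or.inr ?_⟩
          intro xx yy hh hlast
          rw [hlx] at hh
          have hxx : xx = x := by
            simpa using hh.symm
          rw [hz] at hlast
          have hyy : yy = z := Option.some_inj.mp hlast.symm
          rw [hxx, hyy]
          exact fun h => hzx h.symm

lemma exists_good_conj (w : FreeGroup A) (hw : w ≠ 1) :
    ∃ u : FreeGroup A, IsGoodWord (u * w * u⁻¹) :=
  good_aux (reducedWord w).length w le_rfl hw

end Reduced

/-! ### Compactness: computations with `g` are captured by conditions in `G` -/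

lemma exists_cond_of_mem_listEval
    (G : Set ((ℕ →. ℕ) × Set (FreeGroup (Option B))))
    (hG : ∀ p ∈ G, IsCondition p)
    (hdir : ∀ p ∈ G, ∀ q ∈ G, ∃ r ∈ G, Extends ρ r p ∧ Extends ρ r q)
    (hne : ∃ p, p ∈ G)
    (g : Equiv.Perm ℕ) (hg : ∀ n : ℕ, ∃ p ∈ G, (g n : ℕ) ∈ p.1 n) :
    ∀ (l : List (Option B × Bool)) (n m : ℕ), m ∈ listEval ρ (PFun.lift ⇑g) l n →
      ∃ q ∈ G, m ∈ listEval ρ q.1 l n := by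
  intro l
  induction l with
  | nil =>
    intro n m h
    obtain ⟨p, hp⟩ := hne
    exact ⟨p, hp, h⟩
  | cons x u ih =>
    intro n m h
    rw [mem_listEval_cons] at h
    obtain ⟨k, hk, hm⟩ := h
    obtain ⟨q, hqG, hkq⟩ := ih n k hk
    rcases x with ⟨_ | b, _ | _⟩
    · -- (none, false)
      have hgmk : (g : Equiv.Perm ℕ) m = k := mem_pfunLift.mp (pfunInv_mem hm)
      obtain ⟨p, hpG, hpm⟩ := hg m
      rw [hgmk] at hpm
      obtain ⟨r, hrG, hrp, hrq⟩ := hdir p hpG q hqG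
      have hrinj := (hG r hrG).1.2
      refine ⟨r, hrG, ?_⟩
      rw [mem_listEval_cons]
      exact ⟨k, listEval_mono ρ hrinj hrq.1 u hkq, mem_pfunInv hrinj (hrp.1 hpm)⟩
    · -- (none, true)
      obtain ⟨p, hpG, hpm⟩ := hg k
      obtain ⟨r, hrG, hrp, hrq⟩ := hdir p hpG q hqG
      have hrinj := (hG r hrG).1.2
      refine ⟨r, hrG, ?_⟩
      rw [mem_listEval_cons]
      refine ⟨k, listEval_mono ρ hrinj hrq.1 u hkq, ?_⟩
      show m ∈ r.1 k
      have hgk : (g : Equiv.Perm ℕ) k = m := mem_pfunLift.mp hm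
      exact hgk ▸ hrp.1 hpm
    · exact ⟨q, hqG, by rw [mem_listEval_cons]; exact ⟨k, hkq, hm⟩⟩
    · exact ⟨q, hqG, by rw [mem_listEval_cons]; exact ⟨k, hkq, hm⟩⟩

end Aux


/-- If the image of `ρ̂` is cofinitary and `G` is a filter on `Q_{{a},ρ}` meeting every
domain and range dense set and containing, for every good word `w`, a condition whose side
set contains `w`, then the union `g` of the first coordinates of members of `G` is a
permutation of `ℕ` and the subgroup generated by `{g} ∪ ρ(B)` is a cofinitary group. -/
theorem generic_cofinitary_group {B : Type*} (ρ : B → Equiv.Perm ℕ)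
    (hcof : IsCofinitaryGroup (FreeGroup.lift ρ).range)
    (G : Set ((ℕ →. ℕ) × Set (FreeGroup (Option B))))
    (hG : ∀ p ∈ G, IsCondition p)
    (hdir : ∀ p ∈ G, ∀ q ∈ G, ∃ r ∈ G, Extends ρ r p ∧ Extends ρ r q)
    (hup : ∀ p ∈ G, ∀ q, IsCondition q → Extends ρ p q → q ∈ G)
    (hdom : ∀ n : ℕ, ∃ p ∈ G, n ∈ p.1.Dom)
    (hran : ∀ n : ℕ, ∃ p ∈ G, n ∈ p.1.ran)
    (hword : ∀ w : FreeGroup (Option B), IsGoodWord w → ∃ p ∈ G, w ∈ p.2) :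
    ∃ g : Equiv.Perm ℕ,
      (∀ n m : ℕ, (∃ p ∈ G, m ∈ p.1 n) ↔ g n = m) ∧
      IsCofinitaryGroup (Subgroup.closure ({g} ∪ Set.range ρ : Set (Equiv.Perm ℕ))) := by
  classical
  obtain ⟨p₀, hp₀⟩ : ∃ p, p ∈ G := by
    obtain ⟨p, hp, -⟩ := hdom 0
    exact ⟨p, hp⟩
  have huniq : ∀ (p q : (ℕ →. ℕ) × Set (FreeGroup (Option B))) {n m m' : ℕ},
      p ∈ G → q ∈ G → m ∈ p.1 n → m' ∈ q.1 n → m = m' := by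
    intro p q n m m' hp hq hm hm'
    obtain ⟨r, hrG, hrp, hrq⟩ := hdir p hp q hq
    exact Part.mem_unique (hrp.1 hm) (hrq.1 hm')
  choose pw hpwG hpwdom using hdom
  set f : ℕ → ℕ := fun n => ((pw n).1 n).get (hpwdom n) with hf
  have hfmem : ∀ n, f n ∈ (pw n).1 n := fun n => Part.get_mem _
  have hinjf : Function.Injective f := by
    intro n₁ n₂ hn
    obtain ⟨r, hrG, hr1, hr2⟩ := hdir (pw n₁) (hpwG n₁) (pw n₂) (hpwG n₂)
    exact (hG r hrG).1.2 (hr1.1 (hfmem n₁)) (hn ▸ hr2.1 (hfmem n₂))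
  have hsurjf : Function.Surjective f := by
    intro m
    obtain ⟨q, hqG, hq⟩ := hran m
    obtain ⟨n, hn⟩ := hq
    exact ⟨n, huniq (pw n) q (hpwG n) hqG (hfmem n) hn⟩
  set g : Equiv.Perm ℕ := Equiv.ofBijective f ⟨hinjf, hsurjf⟩ with hgdef
  have hgmem : ∀ n, ∃ p ∈ G, (g n : ℕ) ∈ p.1 n := fun n => ⟨pw n, hpwG n, hfmem n⟩
  have hgiff : ∀ n m : ℕ, (∃ p ∈ G, m ∈ p.1 n) ↔ g n = m := by
    intro n m
    constructor
    · rintro ⟨p, hpG, hm⟩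
      exact huniq (pw n) p (hpwG n) hpG (hfmem n) hm
    · rintro rfl
      exact hgmem n
  refine ⟨g, hgiff, ?_⟩
  set ν : Option B → Equiv.Perm ℕ := fun o => o.elim g ρ with hν
  have hνsome : ∀ b, ν (some b) = ρ b := fun _ => rfl
  have hrange : Subgroup.closure ({g} ∪ Set.range ρ : Set (Equiv.Perm ℕ)) =
      (FreeGroup.lift ν).range := by
    rw [FreeGroup.range_lift_eq_closure]
    congr 1
    ext π
    simp only [Set.mem_union, Set.mem_singleton_iff, Set.mem_range]
    constructor
    · rintro (rfl | ⟨b, rfl⟩)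
      · exact ⟨none, rfl⟩
      · exact ⟨some b, rfl⟩
    · rintro ⟨o, rfl⟩
      cases o with
      | none => exact Or.inl rfl
      | some b => exact Or.inr ⟨b, rfl⟩
  rw [hrange]
  intro h hmem hne
  obtain ⟨w, rfl⟩ := hmem
  have hw1 : w ≠ 1 := by
    rintro rfl
    simp at hne
  obtain ⟨u, hu⟩ := exists_good_conj w hw1
  apply isCofinitary_of_conj (k := FreeGroup.lift ν u)
  rw [show FreeGroup.lift ν u * FreeGroup.lift ν w * (FreeGroup.lift ν u)⁻¹ =
    FreeGroup.lift ν (u * w * u⁻¹) by simp]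
  set w' := u * w * u⁻¹ with hw'def
  have hw'ne : FreeGroup.lift ν w' ≠ 1 := by
    intro hc
    apply hne
    rw [hw'def, map_mul, map_mul, map_inv] at hc
    rw [show FreeGroup.lift ν w = (FreeGroup.lift ν u)⁻¹ *
      (FreeGroup.lift ν u * FreeGroup.lift ν w * (FreeGroup.lift ν u)⁻¹) *
      FreeGroup.lift ν u by group, hc]
    group
  by_cases hpure : ∀ y ∈ reducedWord w', y.1 ≠ (none : Option B)
  · exact hcof _ (lift_mem_range_of_pure ρ ν hνsome w' hpure) hw'ne
  · push_neg at hpure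
    obtain ⟨y, hy, hy1⟩ := hpure
    obtain ⟨p, hpG, hpw⟩ := hword w' hu
    have hal : ∃ e, ((none : Option B), e) ∈ reducedWord w' := by
      refine ⟨y.2, ?_⟩
      rw [← hy1]
      simpa using hy
    show Set.Finite {n : ℕ | FreeGroup.lift ν w' n = n}
    apply (finite_dom_listEval ρ (hG p hpG).1 (reducedWord w') hal).subset
    intro n hn
    rw [Set.mem_setOf_eq] at hn
    have h1 : n ∈ wordEval ρ (PFun.lift ⇑g) w' n := by
      have := (mem_wordEval_lift ρ ν hνsome w' (n := n) (m := n)).mpr hn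
      exact this
    obtain ⟨q, hqG, hq⟩ :=
      exists_cond_of_mem_listEval ρ G hG hdir ⟨p₀, hp₀⟩ g hgmem (reducedWord w') n n h1
    obtain ⟨r, hrG, hrp, hrq⟩ := hdir p hpG q hqG
    have h2 : n ∈ wordEval ρ r.1 w' n := listEval_mono ρ (hG r hrG).1.2 hrq.1 _ hq
    exact hrp.2.2 w' hpw n h2
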